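/- Any directed path of minimal length in the quantum Bruhat graph ending at the longest element w₀ consists only of upward edges; consequently d_Γ(u, w₀) = ℓ(w₀) − ℓ(u) for every u ∈ W. -/

import Mathlib

open Finset

noncomputable section

namespace QBG

variable {ι V V' : Type*} [Fintype ι] [AddCommGroup V] [Module ℝ V]
  [AddCommGroup V'] [Module ℝ V']

variable (P : RootPairing ι ℝ V V') [P.IsRootSystem] (f : V →ₗ[ℝ] ℝ)

/-- `k` indexes a positive root (w.r.t. the regular linear functional `f`). -/
def Pos (k : ι) : Prop := 0 < f (P.root k)

/-- `k` indexes a simple root: positive and not a sum of two positive roots. -/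
def IsSimple (k : ι) : Prop := Pos P f k ∧
  ¬ ∃ i j : ι, Pos P f i ∧ Pos P f j ∧ P.root k = P.root i + P.root j

/-- The reflection `s_α` associated to the root indexed by `k`. -/
def refl (k : ι) : V ≃ₗ[ℝ] V := P.reflection k

/-- `l` is a word in simple reflections with product `w`. -/
def Wrd (w : V ≃ₗ[ℝ] V) (l : List ι) : Prop :=
  (∀ i ∈ l, IsSimple P f i) ∧ (l.map (refl P)).prod = w

/-- `w` lies in the Weyl group (generated by simple reflections). -/
def InW (w : V ≃ₗ[ℝ] V) : Prop := ∃ l, Wrd P f w l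

/-- Coxeter length of `w` with respect to the simple reflections. -/
def len (w : V ≃ₗ[ℝ] V) : ℕ := sInf {n | ∃ l, Wrd P f w l ∧ l.length = n}

/-- The pairing `⟨2ρ, α_k^∨⟩` where `ρ` is the half-sum of positive roots. -/
def tworho (k : ι) : ℝ := ∑ i, if 0 < f (P.root i) then P.pairing i k else 0

/-- An upward edge of the quantum Bruhat graph, from `w`, labeled `k`. -/
def UpStep (w : V ≃ₗ[ℝ] V) (k : ι) : Prop :=
  Pos P f k ∧ len P f (w * refl P k) = len P f w + 1

/-- A downward edge of the quantum Bruhat graph, from `w`, labeled `k`. -/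
def DownStep (w : V ≃ₗ[ℝ] V) (k : ι) : Prop :=
  Pos P f k ∧ (len P f (w * refl P k) : ℝ) = (len P f w : ℝ) - tworho P f k + 1

/-- An edge of the quantum Bruhat graph, from `w`, labeled `k`. -/
def Step (w : V ≃ₗ[ℝ] V) (k : ι) : Prop := UpStep P f w k ∨ DownStep P f w k

/-- `ks` is the list of labels of a directed path in the quantum Bruhat graph
starting at `w`. -/
def ValidPath : (V ≃ₗ[ℝ] V) → List ι → Prop
  | _, [] => True
  | w, k :: ks => Step P f w k ∧ ValidPath (w * refl P k) ks

/-- `ks` is the list of labels of an all-downward path starting at `w`. -/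
def DownPath : (V ≃ₗ[ℝ] V) → List ι → Prop
  | _, [] => True
  | w, k :: ks => DownStep P f w k ∧ DownPath (w * refl P k) ks

/-- `ks` is the list of labels of an all-upward path starting at `w`. -/
def UpPath : (V ≃ₗ[ℝ] V) → List ι → Prop
  | _, [] => True
  | w, k :: ks => UpStep P f w k ∧ UpPath (w * refl P k) ks

/-- The endpoint of the path starting at `w` with edge labels `ks`. -/
def pathEnd (w : V ≃ₗ[ℝ] V) (ks : List ι) : V ≃ₗ[ℝ] V := w * (ks.map (refl P)).prod

/-- The distance `d_Γ(u,v)` in the quantum Bruhat graph. -/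
def dist (u v : V ≃ₗ[ℝ] V) : ℕ :=
  sInf {n | ∃ ks, ValidPath P f u ks ∧ pathEnd P u ks = v ∧ ks.length = n}

/-- The all-downward distance `d_↓(w)` from `w` to the identity. -/
def ddown (w : V ≃ₗ[ℝ] V) : ℕ :=
  sInf {n | ∃ ks, DownPath P f w ks ∧ pathEnd P w ks = 1 ∧ ks.length = n}

open Classical in
/-- The pairing of `2ρ` with the weight of the path `(w, ks)`, i.e. the sum of
`⟨2ρ, α^∨⟩` over the downward edges of the path. -/
def downWeight : (V ≃ₗ[ℝ] V) → List ι → ℝ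
  | _, [] => 0
  | w, k :: ks =>
      (if UpStep P f w k then 0 else tworho P f k) + downWeight (w * refl P k) ks

/-- `w` contains `v`: `w = u * v * u'` length-additively. -/
def Contains (w v : V ≃ₗ[ℝ] V) : Prop :=
  ∃ u u', InW P f u ∧ InW P f u' ∧ w = u * v * u' ∧
    len P f w = len P f u + len P f v + len P f u'

/-- `w` is small-height-avoiding: it contains no non-simple reflection `s_β`
with `ℓ(s_β) = ⟨2ρ, β^∨⟩ - 1`. -/
def SmallHeightAvoiding (w : V ≃ₗ[ℝ] V) : Prop :=
  ¬ ∃ k : ι, Pos P f k ∧ ¬ IsSimple P f k ∧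
      (len P f (refl P k) : ℝ) = tworho P f k - 1 ∧ Contains P f w (refl P k)

/-- The root system `P` is reduced. -/
def Reduced : Prop := ∀ i j : ι, P.root i ≠ (2 : ℝ) • P.root j

/-- The linear functional `f` is regular: it vanishes on no root. -/
def Regular : Prop := ∀ i : ι, f (P.root i) ≠ 0

end QBG

/-!
Every edge of the quantum Bruhat graph raises the length by at most one: an upward edge by
exactly one, while a downward edge along `α` lowers it by `⟨2ρ, α∨⟩ - 1 ≥ 1`. Hence a path from
`u` to `w₀` has at least `ℓ(w₀) - ℓ(u)` edges, and a path with exactly that many edges has no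
downward edge. Conversely `w₀` sends every positive root to a negative one, which forces
`ℓ(u⁻¹ w₀) ≤ ℓ(w₀) - ℓ(u)`; a reduced word for `u⁻¹ w₀` is then an upward path from `u` to `w₀`
of that length.
-/

namespace QBG

open RootPairing IsAddIndecomposable

section

variable {ι V V' : Type*} [AddCommGroup V] [Module ℝ V] [AddCommGroup V'] [Module ℝ V']
  {P : RootPairing ι ℝ V V'} {f : V →ₗ[ℝ] ℝ} {u v w w₀ : V ≃ₗ[ℝ] V} {i j k : ι} {l : List ι}

section Words

@[simp]
lemma refl_mul_self (k : ι) : refl P k * refl P k = 1 := by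
  ext x
  simp [refl]

@[simp]
lemma refl_inv (k : ι) : (refl P k)⁻¹ = refl P k :=
  inv_eq_of_mul_eq_one_right (refl_mul_self k)

lemma Wrd.singleton (hk : IsSimple P f k) : Wrd P f (refl P k) [k] :=
  ⟨by simpa using hk, by simp⟩

lemma Wrd.append {m : List ι} (hw : Wrd P f w l) (hv : Wrd P f v m) :
    Wrd P f (w * v) (l ++ m) :=
  ⟨fun i hi => (List.mem_append.mp hi).elim (hw.1 i) (hv.1 i),
    by rw [List.map_append, List.prod_append, hw.2, hv.2]⟩

lemma Wrd.reverse (hw : Wrd P f w l) : Wrd P f w⁻¹ l.reverse :=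
  ⟨fun i hi => hw.1 i (List.mem_reverse.mp hi), by
    simp [← hw.2, List.prod_inv_reverse, List.map_reverse, Function.comp_def]⟩

lemma InW.mul (hw : InW P f w) (hv : InW P f v) : InW P f (w * v) :=
  let ⟨l, hl⟩ := hw
  let ⟨m, hm⟩ := hv
  ⟨l ++ m, hl.append hm⟩

lemma InW.inv (hw : InW P f w) : InW P f w⁻¹ :=
  let ⟨l, hl⟩ := hw
  ⟨l.reverse, hl.reverse⟩

lemma InW.mul_refl (hw : InW P f w) (hk : IsSimple P f k) : InW P f (w * refl P k) :=
  hw.mul ⟨[k], .singleton hk⟩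

lemma len_le_length (hw : Wrd P f w l) : len P f w ≤ l.length :=
  Nat.sInf_le ⟨l, hw, rfl⟩

lemma InW.exists_wrd_length_eq_len (hw : InW P f w) :
    ∃ l, Wrd P f w l ∧ l.length = len P f w :=
  let ⟨l, hl⟩ := hw
  Nat.sInf_mem (s := {n | ∃ l, Wrd P f w l ∧ l.length = n}) ⟨l.length, l, hl, rfl⟩

lemma len_mul_le (hw : InW P f w) (hv : InW P f v) :
    len P f (w * v) ≤ len P f w + len P f v := by
  obtain ⟨l, hl, hlw⟩ := hw.exists_wrd_length_eq_len
  obtain ⟨m, hm, hmv⟩ := hv.exists_wrd_length_eq_len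
  simpa [hlw, hmv] using len_le_length (hl.append hm)

lemma len_mul_refl_le (hw : InW P f w) (hk : IsSimple P f k) :
    len P f (w * refl P k) ≤ len P f w + 1 :=
  (len_mul_le hw ⟨[k], .singleton hk⟩).trans
    (Nat.add_le_add_left (len_le_length (.singleton hk)) _)

lemma len_inv (hw : InW P f w) : len P f w⁻¹ = len P f w := by
  have key : ∀ {v : V ≃ₗ[ℝ] V}, InW P f v → len P f v⁻¹ ≤ len P f v := fun hv => by
    obtain ⟨l, hl, hlv⟩ := hv.exists_wrd_length_eq_len
    simpa [hlv] using len_le_length hl.reverse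
  exact (key hw).antisymm (by simpa using key hw.inv)

lemma InW.exists_eq_mul_refl {n : ℕ} (hu : InW P f u) (hn : len P f u = n + 1) :
    ∃ v k, InW P f v ∧ IsSimple P f k ∧ u = v * refl P k ∧ len P f v = n := by
  obtain ⟨l, hl, hlen⟩ := hu.exists_wrd_length_eq_len
  rcases l.eq_nil_or_concat with rfl | ⟨l', k, rfl⟩
  · rw [List.length_nil] at hlen
    omega
  rw [List.length_concat] at hlen
  have hl' : Wrd P f (l'.map (refl P)).prod l' := ⟨fun i hi => hl.1 i (by simp [hi]), rfl⟩
  have hu' : u = (l'.map (refl P)).prod * refl P k := by simp [← hl.2]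
  have hk : IsSimple P f k := hl.1 k (by simp)
  refine ⟨_, k, ⟨l', hl'⟩, hk, hu', le_antisymm ?_ ?_⟩
  · have := len_le_length hl'
    omega
  · have := len_mul_refl_le ⟨l', hl'⟩ hk
    rw [← hu'] at this
    omega

end Words

section Roots

lemma exists_prod_refl_apply_root_eq (l : List ι) (i : ι) :
    ∃ j, (l.map (refl P)).prod (P.root i) = P.root j := by
  induction l with
  | nil => exact ⟨i, rfl⟩
  | cons t l ih =>
    obtain ⟨j, hj⟩ := ih
    exact ⟨P.reflectionPerm t j, by simp [hj, refl]⟩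

lemma refl_eq_prod_refl_conj (l : List ι) (h : (l.map (refl P)).prod (P.root k) = P.root j) :
    refl P j = (l.map (refl P)).prod * refl P k * ((l.map (refl P)).prod)⁻¹ := by
  induction l generalizing j with
  | nil => simp [P.root.injective h]
  | cons t l ih =>
    obtain ⟨j', hj'⟩ := exists_prod_refl_apply_root_eq (P := P) l k
    have hj : j = P.reflectionPerm t j' := P.root.injective <| by
      simpa [hj', refl] using h.symm
    simp only [hj, refl, P.reflection_reflectionPerm] at ih ⊢
    rw [ih hj']
    simp [mul_assoc, refl]

lemma InW.exists_apply_root_eq (hw : InW P f w) (i : ι) : ∃ j, w (P.root i) = P.root j :=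
  let ⟨l, hl⟩ := hw
  hl.2 ▸ exists_prod_refl_apply_root_eq l i

lemma InW.apply_root_ne_zero (hreg : Regular P f) (hw : InW P f w) (i : ι) :
    f (w (P.root i)) ≠ 0 := by
  obtain ⟨j, hj⟩ := hw.exists_apply_root_eq i
  exact hj ▸ hreg j

end Roots

section SimpleRoots

lemma isReduced_of_reduced [Finite ι] [P.IsCrystallographic] (hred : Reduced P) :
    P.IsReduced := by
  -- dependent roots have Coxeter weight 4, and the pairings `(±1, ±4)`, `(±4, ±1)` make one root
  -- `±2` times the other
  refine ⟨fun i j hij => ?_⟩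
  have h4 := (P.coxeterWeightIn_eq_four_iff_not_linearIndependent ℤ).mpr hij
  have hmem := P.pairingIn_pairingIn_mem_set_of_isCrystallographic i j
  rw [coxeterWeightIn] at h4
  simp only [Set.mem_insert_iff, Set.mem_singleton_iff, Prod.mk.injEq] at hmem
  rcases hmem with h | h | h | h | h | h | h | h | h | h | h | h | h | h | h | h | h <;>
    rw [h.1, h.2] at h4 <;> norm_num at h4
  · exact absurd ((P.pairingIn_one_four_iff ℤ j i).mp ⟨h.2, h.1⟩) (hred i j)
  · exact absurd ((P.pairingIn_one_four_iff ℤ i j).mp h) (hred j i)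
  · have := (P.pairingIn_neg_one_neg_four_iff ℤ j i).mp ⟨h.2, h.1⟩
    exact absurd (by rw [P.root_reflectionPerm, P.reflection_apply_self, this, neg_smul, neg_neg])
      (hred (P.reflectionPerm i i) j)
  · have := (P.pairingIn_neg_one_neg_four_iff ℤ i j).mp h
    exact absurd (by rw [P.root_reflectionPerm, P.reflection_apply_self, this, neg_smul, neg_neg])
      (hred (P.reflectionPerm j j) i)
  · exact Or.inl (by rw [(P.pairingIn_two_two_iff ℤ i j).mp h])
  · exact Or.inr ((P.pairingIn_neg_two_neg_two_iff ℤ i j).mp h)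

lemma isSimple_iff_mem_baseOf : IsSimple P f k ↔ k ∈ baseOf P.root (f : V →+ ℝ) := by
  simp [IsSimple, baseOf, IsAddIndecomposable, Pos, P.ne_zero]

lemma Pos.apply_neg_of_forall_isSimple [Finite ι] (hi : Pos P f i) (g : V →ₗ[ℝ] ℝ)
    (hg : ∀ k, IsSimple P f k → g (P.root k) < 0) : g (P.root i) < 0 := by
  have hcl : P.root i ∈ AddSubmonoid.closure (P.root '' baseOf P.root (f : V →+ ℝ)) := by
    rw [AddSubmonoid.closure_image_isAddIndecomposable_baseOf]
    exact AddSubmonoid.subset_closure ⟨i, hi, rfl⟩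
  suffices ∀ x ∈ AddSubmonoid.closure (P.root '' baseOf P.root (f : V →+ ℝ)), x = 0 ∨ g x < 0 from
    (this _ hcl).resolve_left (P.ne_zero i)
  intro x hx
  induction hx using AddSubmonoid.closure_induction with
  | mem x hx =>
    obtain ⟨k, hk, rfl⟩ := hx
    exact Or.inr (hg k (isSimple_iff_mem_baseOf.mpr hk))
  | zero => exact Or.inl rfl
  | add x y _ _ hx hy =>
    rcases hx with rfl | hx
    · simpa using hy
    rcases hy with rfl | hy
    · simpa using Or.inr hx
    exact Or.inr (by rw [map_add]; linarith)

variable [Finite ι] [P.IsRootSystem] [P.IsCrystallographic] [P.IsReduced]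

variable (P) in
noncomputable def simpleBase (hreg : Regular P f) : P.Base :=
  let := P.indexNeg
  Base.mk' P (baseOf P.root (f : V →+ ℝ)) (P.linearIndepOn_root_baseOf' f hreg)
    fun i => mem_or_neg_mem_closure_baseOf P.root (f : V →+ ℝ) i (hreg i) (by simp)

lemma mem_simpleBase_support_iff (hreg : Regular P f) :
    k ∈ (simpleBase P hreg).support ↔ IsSimple P f k := by
  simp [simpleBase, Base.mk', isSimple_iff_mem_baseOf]

lemma simpleBase_isPos_iff (hreg : Regular P f) : (simpleBase P hreg).IsPos i ↔ Pos P f i := by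
  let := P.indexNeg
  have pos_of_isPos : ∀ {j}, (simpleBase P hreg).IsPos j → Pos P f j := fun hj =>
    hj.induction_on_add (fun k hk => ((mem_simpleBase_support_iff hreg).mp hk).1)
      fun a b c habc ha hb => by
        have hb' := ((mem_simpleBase_support_iff hreg).mp hb).1
        unfold Pos at *
        rw [habc, map_add]
        exact add_pos ha hb'
  refine ⟨pos_of_isPos, fun hi => ?_⟩
  by_contra hneg
  have := pos_of_isPos ((Base.IsPos.neg_iff_not _ i).mpr hneg)
  unfold Pos at hi this
  simp only [indexNeg_neg, root_reflectionPerm, reflection_apply_self, map_neg] at this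
  linarith

lemma Pos.reflectionPerm_of_isSimple (hreg : Regular P f) (hk : IsSimple P f k)
    (hi : Pos P f i) (hik : i ≠ k) : Pos P f (P.reflectionPerm k i) := by
  rw [← simpleBase_isPos_iff hreg] at hi ⊢
  exact hi.reflectionPerm ((mem_simpleBase_support_iff hreg).mpr hk) hik

end SimpleRoots

section Exchange

variable [Finite ι] [P.IsRootSystem] [P.IsCrystallographic] [P.IsReduced] (hreg : Regular P f)
include hreg

/-- Write `w = s_t v`. If `v α_k > 0` while `w α_k < 0`, then `v α_k = α_t` because `s_t` permutes
the other positive roots; hence `s_t = v s_k v⁻¹` and `w s_k = v`. -/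
lemma Wrd.len_mul_refl_lt_length (hw : Wrd P f w l) (hk : IsSimple P f k)
    (hneg : f (w (P.root k)) < 0) : len P f (w * refl P k) < l.length := by
  induction l generalizing w with
  | nil =>
    rw [← hw.2] at hneg
    exact absurd hk.1 (not_lt.mpr hneg.le)
  | cons t l ih =>
    set v := (l.map (refl P)).prod
    have hv : Wrd P f v l := ⟨fun i hi => hw.1 i (List.mem_cons_of_mem t hi), rfl⟩
    have ht : IsSimple P f t := hw.1 t List.mem_cons_self
    have hwv : w = refl P t * v := by simp [← hw.2, v]
    rcases (InW.apply_root_ne_zero hreg ⟨l, hv⟩ k).lt_or_gt with hneg' | hpos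
    · calc len P f (w * refl P k) = len P f (refl P t * (v * refl P k)) := by rw [hwv, mul_assoc]
        _ ≤ len P f (refl P t) + len P f (v * refl P k) :=
          len_mul_le ⟨[t], .singleton ht⟩ (InW.mul_refl ⟨l, hv⟩ hk)
        _ < 1 + l.length :=
          Nat.add_lt_add_of_le_of_lt (len_le_length (.singleton ht)) (ih hv hneg')
        _ = (t :: l).length := by simp [add_comm]
    · obtain ⟨j, hj⟩ := exists_prod_refl_apply_root_eq (P := P) l k
      have hjt : j = t := by
        by_contra hjt
        have := Pos.reflectionPerm_of_isSimple hreg ht (show Pos P f j by rwa [Pos, ← hj]) hjt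
        rw [Pos, root_reflectionPerm, ← hj] at this
        rw [hwv] at hneg
        exact absurd this (not_lt.mpr hneg.le)
      have hcollapse : w * refl P k = v := by
        rw [hwv, refl_eq_prod_refl_conj l (hjt ▸ hj)]
        simp [v, mul_assoc]
      rw [hcollapse]
      exact (len_le_length hv).trans_lt (by simp)

lemma InW.len_mul_refl_lt (hw : InW P f w) (hk : IsSimple P f k)
    (hneg : f (w (P.root k)) < 0) : len P f (w * refl P k) < len P f w := by
  obtain ⟨l, hl, hlen⟩ := hw.exists_wrd_length_eq_len
  exact hlen ▸ hl.len_mul_refl_lt_length hreg hk hneg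

lemma InW.len_mul_refl_of_pos (hw : InW P f w) (hk : IsSimple P f k)
    (hpos : 0 < f (w (P.root k))) : len P f (w * refl P k) = len P f w + 1 := by
  have hlt := (hw.mul_refl hk).len_mul_refl_lt hreg hk
    (by simpa [refl] using hpos : f ((w * refl P k) (P.root k)) < 0)
  rw [mul_assoc, refl_mul_self, mul_one] at hlt
  have := len_mul_refl_le hw hk
  omega

end Exchange

section Longest

variable (P f) in
def IsLongest (w₀ : V ≃ₗ[ℝ] V) : Prop :=
  InW P f w₀ ∧ ∀ w, InW P f w → len P f w ≤ len P f w₀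

lemma IsLongest.inv (h : IsLongest P f w₀) : IsLongest P f w₀⁻¹ :=
  ⟨h.1.inv, fun w hw => (len_inv h.1).symm ▸ h.2 w hw⟩

variable [Finite ι] [P.IsRootSystem] [P.IsCrystallographic] [P.IsReduced] (hreg : Regular P f)
include hreg

lemma IsLongest.apply_root_neg (h : IsLongest P f w₀) (hi : Pos P f i) :
    f (w₀ (P.root i)) < 0 := by
  refine hi.apply_neg_of_forall_isSimple (f ∘ₗ w₀.toLinearMap) fun k hk => ?_
  refine (h.1.apply_root_ne_zero hreg k).lt_or_gt.resolve_right fun hpos => ?_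
  have := h.1.len_mul_refl_of_pos hreg hk hpos
  have := h.2 _ (h.1.mul_refl hk)
  omega

lemma IsLongest.len_inv_mul_add_len_le (h : IsLongest P f w₀) (hu : InW P f u) :
    len P f (u⁻¹ * w₀) + len P f u ≤ len P f w₀ := by
  induction hn : len P f u generalizing u with
  | zero => simpa [len_inv hu, hn] using len_mul_le hu.inv h.1
  | succ n ih =>
    obtain ⟨v, k, hv, hk, rfl, hvn⟩ := hu.exists_eq_mul_refl hn
    have hvk : 0 < f (v (P.root k)) := by
      refine (hv.apply_root_ne_zero hreg k).lt_or_gt.resolve_left fun hneg => ?_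
      have := hv.len_mul_refl_lt hreg hk hneg
      omega
    obtain ⟨j, hj⟩ := hv.exists_apply_root_eq k
    have hx : InW P f (w₀⁻¹ * v) := h.1.inv.mul hv
    have hlt := hx.len_mul_refl_lt hreg hk <| by
      simpa [hj] using h.inv.apply_root_neg hreg (show Pos P f j by rwa [Pos, ← hj])
    have h₁ : (v * refl P k)⁻¹ * w₀ = (w₀⁻¹ * v * refl P k)⁻¹ := by group
    have h₂ : v⁻¹ * w₀ = (w₀⁻¹ * v)⁻¹ := by group
    have := ih hv hvn
    rw [h₂, len_inv hx] at this
    rw [h₁, len_inv (hx.mul_refl hk)]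
    omega

end Longest

section Paths

/-- Multiplying by `f α`: `⟨2ρ, α∨⟩ f(α) = ∑_{β > 0} (f β - f (s_α β))`; reindexing the second sum
by `s_α`, every root contributes a nonnegative amount, and `α`, `-α` contribute `f α` each. -/
lemma two_le_tworho [Fintype ι] (hk : Pos P f k) : 2 ≤ tworho P f k := by
  set σ := P.reflectionPerm k
  set F : ι → ℝ := fun i => f (P.root i)
  set g : ι → ℝ := fun i => (if 0 < F i then F i else 0) - (if 0 < F (σ i) then F i else 0)
  have hσ : ∀ i, F (σ i) = F i - P.pairing i k * F k := fun i => by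
    simp [F, σ, reflection_apply_root]
  have hreindex : ∑ i, (if 0 < F i then F (σ i) else 0) = ∑ i, (if 0 < F (σ i) then F i else 0) := by
    rw [← σ.sum_comp (fun i => if 0 < F (σ i) then F i else 0)]
    simp [σ]
  have hsum : tworho P f k * F k = ∑ i, g i := calc
    tworho P f k * F k = ∑ i, ((if 0 < F i then F i else 0) - (if 0 < F i then F (σ i) else 0)) := by
      rw [tworho, Finset.sum_mul]
      refine Finset.sum_congr rfl fun i _ => ?_
      rw [hσ]
      split_ifs <;> ring
    _ = ∑ i, g i := by rw [Finset.sum_sub_distrib, hreindex, ← Finset.sum_sub_distrib]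
  have hg : ∀ i, 0 ≤ g i := fun i => by
    simp only [g]
    split_ifs <;> linarith
  have hk' : 0 < F k := hk
  have hσk : F (σ k) = - F k := by simp [F, σ]
  have hgk : g k = F k := by
    simp only [g, hσk, if_pos hk', if_neg (by linarith : ¬ 0 < -F k)]
    ring
  have hgσk : g (σ k) = F k := by
    simp only [g, hσk, σ, reflectionPerm_self, if_pos hk', if_neg (by linarith : ¬ 0 < -F k)]
    ring
  have hne : k ≠ σ k := fun h => by
    rw [← h] at hσk
    linarith
  classical
  have : F k + F k ≤ ∑ i, g i := calc
    F k + F k = ∑ i ∈ {k, σ k}, g i := by rw [Finset.sum_pair hne, hgk, hgσk]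
    _ ≤ ∑ i, g i :=
      Finset.sum_le_sum_of_subset_of_nonneg (Finset.subset_univ _) fun i _ _ => hg i
  nlinarith

lemma DownStep.len_add_one_le [Fintype ι] (h : DownStep P f w k) :
    len P f (w * refl P k) + 1 ≤ len P f w := by
  have := two_le_tworho h.1
  have := h.2
  exact_mod_cast (by linarith : (len P f (w * refl P k) : ℝ) + 1 ≤ len P f w)

lemma Step.len_le [Fintype ι] (h : Step P f w k) : len P f (w * refl P k) ≤ len P f w + 1 :=
  h.elim (fun h => h.2.le) fun h => by
    have := h.len_add_one_le
    omega

@[simp]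
lemma pathEnd_nil (w : V ≃ₗ[ℝ] V) : pathEnd P w [] = w := by
  simp [pathEnd]

@[simp]
lemma pathEnd_cons (w : V ≃ₗ[ℝ] V) (k : ι) (ks : List ι) :
    pathEnd P w (k :: ks) = pathEnd P (w * refl P k) ks := by
  simp [pathEnd, mul_assoc]

lemma ValidPath.len_pathEnd_le [Fintype ι] {ks : List ι} (h : ValidPath P f w ks) :
    len P f (pathEnd P w ks) ≤ len P f w + ks.length := by
  induction ks generalizing w with
  | nil => simp
  | cons k ks ih =>
    have := h.1.len_le
    have := ih h.2
    simp only [pathEnd_cons, List.length_cons]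
    omega

lemma ValidPath.upPath [Fintype ι] {ks : List ι} (h : ValidPath P f w ks)
    (hlen : len P f w + ks.length ≤ len P f (pathEnd P w ks)) : UpPath P f w ks := by
  induction ks generalizing w with
  | nil => trivial
  | cons k ks ih =>
    have := h.2.len_pathEnd_le
    simp only [pathEnd_cons, List.length_cons] at hlen
    refine h.1.elim (fun hup => ⟨hup, ih h.2 (by rw [hup.2]; omega)⟩) fun hdown => ?_
    have := hdown.len_add_one_le
    omega

lemma UpPath.validPath [Fintype ι] {ks : List ι} (h : UpPath P f w ks) : ValidPath P f w ks := by
  induction ks generalizing w with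
  | nil => trivial
  | cons k ks ih => exact ⟨.inl h.1, ih h.2⟩

lemma upPath_of_wrd {ks : List ι} (hw : InW P f w) (hv : Wrd P f v ks)
    (hlen : len P f w + ks.length ≤ len P f (w * v)) : UpPath P f w ks := by
  induction ks generalizing w v with
  | nil => trivial
  | cons k ks ih =>
    obtain ⟨hsimple, rfl⟩ := hv
    have hk : IsSimple P f k := hsimple k List.mem_cons_self
    have hks : Wrd P f (ks.map (refl P)).prod ks :=
      ⟨fun i hi => hsimple i (List.mem_cons_of_mem k hi), rfl⟩
    have h₁ := len_mul_le (hw.mul_refl hk) ⟨ks, hks⟩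
    have h₂ := len_mul_refl_le hw hk
    have h₃ := len_le_length hks
    simp only [List.map_cons, List.prod_cons, List.length_cons, ← mul_assoc] at hlen h₁
    exact ⟨⟨hk.1, by omega⟩, ih (hw.mul_refl hk) hks (by omega)⟩

lemma dist_le [Fintype ι] {ks : List ι} (h : ValidPath P f u ks) (hend : pathEnd P u ks = v) :
    dist P f u v ≤ ks.length :=
  Nat.sInf_le ⟨ks, h, hend, rfl⟩

lemma exists_validPath_length_eq_dist [Fintype ι] {ks : List ι} (h : ValidPath P f u ks)
    (hend : pathEnd P u ks = v) :
    ∃ ks, ValidPath P f u ks ∧ pathEnd P u ks = v ∧ ks.length = dist P f u v :=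
  Nat.sInf_mem (s := {n | ∃ ks, ValidPath P f u ks ∧ pathEnd P u ks = v ∧ ks.length = n})
    ⟨ks.length, ks, h, hend, rfl⟩

end Paths

end

variable {ι V V' : Type*} [Fintype ι] [AddCommGroup V] [Module ℝ V]
  [AddCommGroup V'] [Module ℝ V']

variable (P : RootPairing ι ℝ V V') [P.IsRootSystem] (f : V →ₗ[ℝ] ℝ)

/-- any minimal directed path in the quantum Bruhat graph ending at
the longest element `w₀` uses only upward edges; consequently
`d_Γ(u, w₀) = ℓ(w₀) - ℓ(u)`. -/
theorem dist_to_longest (hP : P.IsCrystallographic) (hred : Reduced P) (hreg : Regular P f) (w₀ : V ≃ₗ[ℝ] V) (hw₀ : InW P f w₀)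
    (hmax : ∀ w : V ≃ₗ[ℝ] V, InW P f w → len P f w ≤ len P f w₀)
    (u : V ≃ₗ[ℝ] V) (hu : InW P f u) :
    (∀ ks : List ι, ValidPath P f u ks → pathEnd P u ks = w₀ →
        ks.length = dist P f u w₀ → UpPath P f u ks) ∧
      dist P f u w₀ + len P f u = len P f w₀ := by
  have : P.IsReduced := isReduced_of_reduced hred
  have hcompl := IsLongest.len_inv_mul_add_len_le hreg ⟨hw₀, hmax⟩ hu
  obtain ⟨m, hm, hmlen⟩ := (hu.inv.mul hw₀).exists_wrd_length_eq_len
  have hend : pathEnd P u m = w₀ := by rw [pathEnd, hm.2, mul_inv_cancel_left]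
  have hup : UpPath P f u m := upPath_of_wrd hu hm (by rw [mul_inv_cancel_left]; omega)
  have hdist_le := dist_le hup.validPath hend
  obtain ⟨ks, hks, hksend, hkslen⟩ := exists_validPath_length_eq_dist hup.validPath hend
  have hlen_le := hks.len_pathEnd_le
  rw [hksend, hkslen] at hlen_le
  refine ⟨fun ks hv hend' hlen => hv.upPath (by rw [hend', hlen]; omega), by omega⟩

end QBG
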